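/- Let G = P_3 be the path on 3 vertices with endpoints u = 1 and v = 3, and let the potential be q = (0, c, 0) for a real number c ≠ 0. If perfect state transfer occurs from u to v at a time T > 0, then |c|·T ≥ 2π. In other words, the potential value and the transfer time cannot both be small. -/

import Mathlib

/-!
`U = exp (i T H)` is unitary and commutes with `H`. If `‖U₀₂‖ = 1`, unitarity kills the other
entries of row `0` and column `2`, and commuting with `H` then forces `U = γ S` for the matrix `S`
swapping the endpoints. Since `H (1, 0, -1) = 0`, `U` fixes `(1, 0, -1)`, so `γ = -1`. The
vectors `(1, λ, 1)` with `λ² = c λ + 2` are eigenvectors of `H`, so `exp (i T λ) = -1` for both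
roots `λ`; these sum to `c`, hence `exp (i T c) = 1` and `T c ≠ 0` is a multiple of `2π`.
-/

open Matrix

/-- Adjacency matrix of the path on `n` vertices. -/
def pathAdj (n : ℕ) : Matrix (Fin n) (Fin n) ℝ :=
  Matrix.of fun j k => if (j : ℕ) + 1 = (k : ℕ) ∨ (k : ℕ) + 1 = (j : ℕ) then 1 else 0

/-- Hamiltonian of the path on `n` vertices with potential `q`. -/
def pathHam (n : ℕ) (q : Fin n → ℝ) : Matrix (Fin n) (Fin n) ℝ :=
  pathAdj n + Matrix.diagonal q

/-- Perfect state transfer from `u` to `v` at time `T` for real Hamiltonian `H`. -/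
noncomputable def pst {ι : Type*} [Fintype ι] [DecidableEq ι]
    (H : Matrix ι ι ℝ) (u v : ι) (T : ℝ) : Prop :=
  ‖NormedSpace.exp ((Complex.I * (T : ℂ)) • H.map (Complex.ofReal)) u v‖ = 1

open NormedSpace

namespace Matrix

variable {n 𝕂 : Type*} [Fintype n] [DecidableEq n] [RCLike 𝕂]

open scoped Norms.Operator in
theorem exp_mulVec_of_mulVec_eq_smul {A : Matrix n n 𝕂} {v : n → 𝕂} {μ : 𝕂}
    (h : A *ᵥ v = μ • v) : exp A *ᵥ v = exp μ • v := by
  have hpow (k : ℕ) : A ^ k *ᵥ v = μ ^ k • v := by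
    induction k with
    | zero => simp
    | succ k ih => rw [pow_succ', ← mulVec_mulVec, ih, mulVec_smul, h, smul_smul, pow_succ]
  have hA := (exp_series_hasSum_exp' (𝕂 := 𝕂) A).map (mulVec.addMonoidHomLeft v)
    (continuous_id.matrix_mulVec continuous_const)
  refine hA.unique ?_
  simpa [Function.comp_def, mulVec.addMonoidHomLeft, smul_mulVec, hpow, smul_smul]
    using (exp_series_hasSum_exp' (𝕂 := 𝕂) μ).smul_const v

theorem exp_mem_unitary_of_mem_skewAdjoint {A : Matrix n n 𝕂}
    (hA : A ∈ skewAdjoint (Matrix n n 𝕂)) : exp A ∈ unitary (Matrix n n 𝕂) := by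
  rw [← unitaryGroup, mem_unitaryGroup_iff, star_eq_conjTranspose, ← exp_conjTranspose,
    ← star_eq_conjTranspose, skewAdjoint.mem_iff.mp hA,
    ← exp_add_of_commute _ _ (Commute.refl A).neg_right, add_neg_cancel, exp_zero]

theorem sum_norm_sq_apply_of_mem_unitary {U : Matrix n n 𝕂} (hU : U ∈ unitary (Matrix n n 𝕂))
    (i : n) : ∑ j, ‖U i j‖ ^ 2 = 1 := by
  have hrow : (U * Uᴴ) i i = ((∑ j, ‖U i j‖ ^ 2 : ℝ) : 𝕂) := by
    simp only [mul_apply, conjTranspose_apply, ← starRingEnd_apply, RCLike.mul_conj]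
    norm_cast
  rw [← star_eq_conjTranspose, Unitary.mul_star_self_of_mem hU, one_apply_eq] at hrow
  exact_mod_cast hrow.symm

theorem apply_eq_zero_of_norm_apply_eq_one_of_ne {U : Matrix n n 𝕂}
    (hU : U ∈ unitary (Matrix n n 𝕂)) {i j k : n} (hij : ‖U i j‖ = 1) (hk : k ≠ j) :
    U i k = 0 := by
  have hsum := sum_norm_sq_apply_of_mem_unitary hU i
  rw [← Finset.add_sum_erase _ _ (Finset.mem_univ j), hij, one_pow, add_eq_left,
    Finset.sum_eq_zero_iff_of_nonneg (fun _ _ ↦ sq_nonneg _)] at hsum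
  simpa using hsum k (by simp [hk])

theorem apply_eq_zero_of_norm_apply_eq_one_of_ne' {U : Matrix n n 𝕂}
    (hU : U ∈ unitary (Matrix n n 𝕂)) {i j k : n} (hij : ‖U i j‖ = 1) (hk : k ≠ i) :
    U k j = 0 := by
  have hstar : ‖star U j i‖ = 1 := by simpa [star_apply] using hij
  simpa [star_apply] using
    apply_eq_zero_of_norm_apply_eq_one_of_ne (Unitary.star_mem hU) hstar hk

end Matrix

section PathThree

variable {R : Type*} [CommRing R]

theorem pathHam_three_map_ofReal (c : ℝ) :
    (pathHam 3 ![0, c, 0]).map Complex.ofReal = !![0, 1, 0; 1, (c : ℂ), 1; 0, 1, 0] := by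
  ext i j
  fin_cases i <;> fin_cases j <;> simp [pathHam, pathAdj]

theorem eq_smul_swap_of_commute_pathThree {c : R} {U : Matrix (Fin 3) (Fin 3) R}
    (hU : Commute U !![0, 1, 0; 1, c, 1; 0, 1, 0])
    (h00 : U 0 0 = 0) (h01 : U 0 1 = 0) (h12 : U 1 2 = 0) (h22 : U 2 2 = 0) :
    U = U 0 2 • !![0, 0, 1; 0, 1, 0; 1, 0, 0] := by
  have e00 : U 0 1 = U 1 0 := by simpa [mul_apply, Fin.sum_univ_three] using congrFun₂ hU.eq 0 0
  have e01 : U 0 0 + U 0 1 * c + U 0 2 = U 1 1 := by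
    simpa [mul_apply, Fin.sum_univ_three] using congrFun₂ hU.eq 0 1
  have e10 : U 1 1 = U 0 0 + c * U 1 0 + U 2 0 := by
    simpa [mul_apply, Fin.sum_univ_three] using congrFun₂ hU.eq 1 0
  have e20 : U 2 1 = U 1 0 := by simpa [mul_apply, Fin.sum_univ_three] using congrFun₂ hU.eq 2 0
  ext i j
  fin_cases i <;> fin_cases j <;> simp <;> grind

theorem pathThree_mulVec_antisymm (c : R) :
    !![0, 1, 0; 1, c, 1; 0, 1, 0] *ᵥ ![1, 0, -1] = 0 := by
  ext i; fin_cases i <;> simp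

theorem pathThree_mulVec_symm {c x : R} (hx : x ^ 2 = c * x + 2) :
    !![0, 1, 0; 1, c, 1; 0, 1, 0] *ᵥ ![1, x, 1] = x • ![1, x, 1] := by
  ext i; fin_cases i <;> simp; linear_combination -hx

theorem exp_pathThree_eq_neg_swap {c T : ℝ}
    (h : ‖exp ((Complex.I * T) • !![0, 1, 0; 1, (c : ℂ), 1; 0, 1, 0]) 0 2‖ = 1) :
    exp ((Complex.I * T) • !![0, 1, 0; 1, (c : ℂ), 1; 0, 1, 0]) =
      -!![0, 0, 1; 0, 1, 0; 1, 0, 0] := by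
  set M : Matrix (Fin 3) (Fin 3) ℂ := !![0, 1, 0; 1, (c : ℂ), 1; 0, 1, 0]
  set U := exp ((Complex.I * T) • M)
  have hX : (Complex.I * T) • M ∈ skewAdjoint (Matrix (Fin 3) (Fin 3) ℂ) := by
    rw [skewAdjoint.mem_iff]
    ext i j; fin_cases i <;> fin_cases j <;> simp [M, star_apply]
  have hU : U ∈ unitary (Matrix (Fin 3) (Fin 3) ℂ) :=
    exp_mem_unitary_of_mem_skewAdjoint (A := (Complex.I * T) • M) hX
  have hcomm : Commute U M := ((Commute.refl M).smul_left _).exp_left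
  have hswap := eq_smul_swap_of_commute_pathThree hcomm
    (apply_eq_zero_of_norm_apply_eq_one_of_ne hU h (by decide))
    (apply_eq_zero_of_norm_apply_eq_one_of_ne hU h (by decide))
    (apply_eq_zero_of_norm_apply_eq_one_of_ne' hU h (by decide))
    (apply_eq_zero_of_norm_apply_eq_one_of_ne' hU h (by decide))
  have hanti : U *ᵥ ![1, 0, -1] = exp (0 : ℂ) • ![(1 : ℂ), 0, -1] :=
    exp_mulVec_of_mulVec_eq_smul <| by
      rw [smul_mulVec, pathThree_mulVec_antisymm, smul_zero, zero_smul]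
  rw [hswap] at hanti
  have hγ : U 0 2 = -1 := by
    simpa [mulVec, dotProduct, Fin.sum_univ_three, neg_eq_iff_eq_neg] using congrFun hanti 0
  rw [hswap, hγ, neg_one_smul]

theorem exp_mul_eq_neg_one_of_exp_smul_eq_neg_swap {t c x : ℂ}
    (h : exp (t • !![0, 1, 0; 1, c, 1; 0, 1, 0]) = -!![0, 0, 1; 0, 1, 0; 1, 0, 0])
    (hx : x ^ 2 = c * x + 2) : Complex.exp (t * x) = -1 := by
  have hsymm :
      exp (t • !![0, 1, 0; 1, c, 1; 0, 1, 0]) *ᵥ ![1, x, 1] = exp (t * x) • ![1, x, 1] :=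
    exp_mulVec_of_mulVec_eq_smul (by rw [smul_mulVec, pathThree_mulVec_symm hx, smul_smul])
  rw [h] at hsymm
  rw [Complex.exp_eq_exp_ℂ]
  simpa [mulVec, dotProduct, Fin.sum_univ_three] using (congrFun hsymm 0).symm

end PathThree

theorem two_pi_le_abs_of_exp_mul_I_eq_one {θ : ℝ} (hθ : θ ≠ 0)
    (h : Complex.exp (θ * Complex.I) = 1) : 2 * Real.pi ≤ |θ| := by
  obtain ⟨k, hk⟩ := Complex.exp_eq_one_iff.mp h
  have hθk : θ = k * (2 * Real.pi) := by simpa using congrArg Complex.im hk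
  have hk0 : k ≠ 0 := by rintro rfl; simp_all
  rw [hθk, abs_mul, abs_of_pos Real.two_pi_pos]
  exact le_mul_of_one_le_left Real.two_pi_pos.le (by exact_mod_cast Int.one_le_abs hk0)

/-- On the path `P₃` with potential `(0, c, 0)`, `c ≠ 0`, if perfect state
transfer between the endpoints occurs at a time `T > 0`, then `|c|·T ≥ 2π`. -/
theorem pst_P3_time_lower_bound (c : ℝ) (hc : c ≠ 0) (T : ℝ) (hT : 0 < T)
    (h : pst (pathHam 3 ![0, c, 0]) 0 2 T) :
    2 * Real.pi ≤ |c| * T := by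
  rw [pst, pathHam_three_map_ofReal] at h
  have hU := exp_pathThree_eq_neg_swap h
  obtain ⟨s, hs⟩ := IsAlgClosed.exists_eq_mul_self ((c : ℂ) ^ 2 + 8)
  have hx : ((c + s) / 2) ^ 2 = c * ((c + s) / 2) + 2 := by linear_combination -hs / 4
  have hy : ((c - s) / 2) ^ 2 = c * ((c - s) / 2) + 2 := by linear_combination -hs / 4
  have hTc : Complex.exp ((T * c : ℝ) * Complex.I) = 1 := by
    calc _ = Complex.exp (Complex.I * T * ((c + s) / 2)) *
          Complex.exp (Complex.I * T * ((c - s) / 2)) := by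
          rw [← Complex.exp_add]; push_cast; ring_nf
      _ = 1 := by
          rw [exp_mul_eq_neg_one_of_exp_smul_eq_neg_swap hU hx,
            exp_mul_eq_neg_one_of_exp_smul_eq_neg_swap hU hy]
          norm_num
  calc 2 * Real.pi ≤ |T * c| := two_pi_le_abs_of_exp_mul_I_eq_one (mul_ne_zero hT.ne' hc) hTc
    _ = |c| * T := by rw [abs_mul, abs_of_pos hT, mul_comm]
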